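/- Let g be a Lie algebra with invariant element t and associator expansion Φ(ħt¹²,ħt²³) = 1 + (ħ²/6)φ + O(ħ³) with φ = (1/4)[t¹²,t²³]. Suppose m_ħ = Σ ħⁱ m_{(i)} : A ⊗ A → A[[ħ]] satisfies the Φ-twisted associativity m_ħ ∘ (1 ⊗ m_ħ) ∘ Φ_A = m_ħ ∘ (m_ħ ⊗ 1), where Φ_A is the action of Φ(ħt¹², ħt²³) on A^⊗3, and that m_0 = m_{(0)} is commutative. Define {a,b} := m_{(1)}(a⊗b − b⊗a). Then {·,·} is a skew-symmetric biderivation of (A, m_0) and satisfies {a₁,{a₂,a₃}} + cyclic permutations = −m_0⁽³⁾(φ·(a₁⊗a₂⊗a₃)), i.e., (A, m_0, {·,·}) is a g-quasi-Poisson algebra. -/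

import Mathlib

open TensorProduct

variable {k : Type*} [Field k] [CharZero k]

/-- Action of an element of `g ⊗ g` on `M ⊗ M` via the two tensor legs. -/
noncomputable def twoLegM {g M : Type*} [AddCommGroup g] [Module k g] [AddCommGroup M]
    [Module k M] (ρ : g →ₗ[k] Module.End k M) :
    g ⊗[k] g →ₗ[k] Module.End k (M ⊗[k] M) :=
  TensorProduct.lift (((TensorProduct.mapBilinear (RingHom.id k) M M M M).comp ρ).compl₂ ρ)

/-- Action of an element of `g ⊗ (g ⊗ g)` on `M ⊗ (M ⊗ M)` via the three legs. -/
noncomputable def threeLegM {g M : Type*} [AddCommGroup g] [Module k g] [AddCommGroup M]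
    [Module k M] (ρ : g →ₗ[k] Module.End k M) :
    g ⊗[k] (g ⊗[k] g) →ₗ[k] Module.End k (M ⊗[k] (M ⊗[k] M)) :=
  TensorProduct.lift
    (((TensorProduct.mapBilinear (RingHom.id k) M (M ⊗[k] M) M (M ⊗[k] M)).comp ρ).compl₂ (twoLegM ρ))

/-- The element `[t¹², t²³] ∈ g ⊗ g ⊗ g`. -/
noncomputable def tCommutator (k : Type*) {g : Type*} [Field k] [LieRing g]
    [LieAlgebra k g] (t : g ⊗[k] g) : g ⊗[k] (g ⊗[k] g) :=
  (TensorProduct.map LinearMap.id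
      (TensorProduct.map (TensorProduct.lift (LieAlgebra.ad k g)) LinearMap.id))
    ((TensorProduct.map LinearMap.id ((TensorProduct.assoc k g g g).symm.toLinearMap))
      ((TensorProduct.assoc k g g (g ⊗[k] g)).toLinearMap (t ⊗ₜ[k] t)))

/-- The Cartan trivector `φ = (1/4)[t¹², t²³]`. -/
noncomputable def cartanPhi (k : Type*) {g : Type*} [Field k] [LieRing g]
    [LieAlgebra k g] (t : g ⊗[k] g) : g ⊗[k] (g ⊗[k] g) :=
  (4 : k)⁻¹ • tCommutator k t

/-!
Expanding the twisted associativity in powers of `ħ`: at order 0 it says that `m₀` is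
associative, and together with commutativity of `m₀` the order-1 identity gives the Leibniz rule
for `{·,·}`. At order 2, take the alternating sum over the six permutations of `(a₁, a₂, a₃)`. The
`m₂`-terms cancel because `m₀` is commutative, and the `m₁ ∘ m₁`-terms add up to the Jacobiator.
Since `t` is symmetric and invariant, `[t¹², t²³]` changes sign under transposing two legs, so
`m₀⁽³⁾(φ · -)` is alternating and the six copies of `φ/6` add up to `φ`.
-/

section Invariant

variable {K g : Type*} [Field K] [LieRing g] [LieAlgebra K g]

variable (K g) in
noncomputable def tCommutatorMap :
    (g ⊗[K] g) ⊗[K] (g ⊗[K] g) →ₗ[K] g ⊗[K] (g ⊗[K] g) :=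
  TensorProduct.map LinearMap.id
      (TensorProduct.map (TensorProduct.lift (LieAlgebra.ad K g)) LinearMap.id) ∘ₗ
    TensorProduct.map LinearMap.id (TensorProduct.assoc K g g g).symm.toLinearMap ∘ₗ
    (TensorProduct.assoc K g g (g ⊗[K] g)).toLinearMap

theorem tCommutator_eq_tCommutatorMap (t : g ⊗[K] g) :
    tCommutator K t = tCommutatorMap K g (t ⊗ₜ t) := rfl

@[simp] theorem tCommutatorMap_tmul (x y x' y' : g) :
    tCommutatorMap K g ((x ⊗ₜ y) ⊗ₜ (x' ⊗ₜ y')) = x ⊗ₜ (⁅y, x'⁆ ⊗ₜ y') := by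
  simp [tCommutatorMap]

/- The invariance `⁅y, t⁆ = 0`, with `y` the second leg of the first copy of `t` acting on the
second copy, reads `[t¹², t²³] + σ₂₃ [t¹², t²³] = 0` by the Leibniz rule and `comm t = t`. -/
theorem lTensor_comm_tCommutator {t : g ⊗[K] g} (hsymm : TensorProduct.comm K g g t = t)
    (hinv : ∀ x : g, ⁅x, t⁆ = 0) :
    (TensorProduct.comm K g g).toLinearMap.lTensor g (tCommutator K t) = -tCommutator K t := by
  set lieLegs23 : (g ⊗[K] g) ⊗[K] (g ⊗[K] g) →ₗ[K] g ⊗[K] (g ⊗[K] g) :=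
    (LieModule.toModuleHom K g (g ⊗[K] g) : g ⊗[K] (g ⊗[K] g) →ₗ[K] g ⊗[K] g).lTensor g ∘ₗ
      (TensorProduct.assoc K g g (g ⊗[K] g)).toLinearMap
  have hvanish : ∀ s, lieLegs23 (s ⊗ₜ t) = 0 := by
    intro s
    induction s using TensorProduct.induction_on with
    | zero => simp
    | tmul x y => simp [lieLegs23, hinv]
    | add u v hu hv => rw [add_tmul, map_add, hu, hv, add_zero]
  have hsplit : lieLegs23 = tCommutatorMap K g +
      (TensorProduct.comm K g g).toLinearMap.lTensor g ∘ₗ tCommutatorMap K g ∘ₗ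
        (TensorProduct.comm K g g).toLinearMap.lTensor (g ⊗[K] g) := by
    ext x y x' y'
    simp [lieLegs23, TensorProduct.LieModule.lie_tmul_right, tmul_add]
  have h := hvanish t
  rw [hsplit] at h
  simp only [LinearMap.add_apply, LinearMap.comp_apply, LinearMap.lTensor_tmul,
    LinearEquiv.coe_coe, hsymm, ← tCommutator_eq_tCommutatorMap] at h
  exact eq_neg_of_add_eq_zero_right h

/- Likewise, with `x'` the first leg of the second copy of `t` acting on the first copy,
`⁅x', t⁆ = 0` reads `[t¹², t²³] + σ₁₂ [t¹², t²³] = 0`. -/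
theorem leftComm_tCommutator {t : g ⊗[K] g} (hsymm : TensorProduct.comm K g g t = t)
    (hinv : ∀ x : g, ⁅x, t⁆ = 0) :
    TensorProduct.leftComm K g g g (tCommutator K t) = -tCommutator K t := by
  set lieLegs12 : (g ⊗[K] g) ⊗[K] (g ⊗[K] g) →ₗ[K] g ⊗[K] (g ⊗[K] g) :=
    (TensorProduct.assoc K g g g).toLinearMap ∘ₗ
      ((LieModule.toModuleHom K g (g ⊗[K] g) : g ⊗[K] (g ⊗[K] g) →ₗ[K] g ⊗[K] g) ∘ₗ
        (TensorProduct.comm K (g ⊗[K] g) g).toLinearMap).rTensor g ∘ₗ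
      (TensorProduct.assoc K (g ⊗[K] g) g g).symm.toLinearMap
  have hvanish : ∀ s, lieLegs12 (t ⊗ₜ s) = 0 := by
    intro s
    induction s using TensorProduct.induction_on with
    | zero => simp
    | tmul x y => simp [lieLegs12, hinv]
    | add u v hu hv => rw [tmul_add, map_add, hu, hv, add_zero]
  have hsplit : lieLegs12 = -((TensorProduct.leftComm K g g g).toLinearMap ∘ₗ
      tCommutatorMap K g ∘ₗ (TensorProduct.comm K g g).toLinearMap.rTensor (g ⊗[K] g)) -
      tCommutatorMap K g := by
    ext x y x' y'
    simp only [lieLegs12, AlgebraTensorModule.curry_apply, LinearMap.restrictScalars_self,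
      curry_apply, LinearMap.coe_comp, LinearEquiv.coe_coe, Function.comp_apply, assoc_symm_tmul, LinearMap.rTensor_tmul,
      LieModuleHom.coe_toLinearMap, comm_tmul, LieModule.toModuleHom_apply,
      LieModule.lie_tmul_right, add_tmul, map_add, assoc_tmul, LinearMap.sub_apply,
      LinearMap.neg_apply, tCommutatorMap_tmul, leftComm_tmul]
    rw [← lie_skew x x', ← lie_skew y x', neg_tmul, neg_tmul, tmul_neg, neg_neg, sub_neg_eq_add]
  have h := hvanish t
  rw [hsplit] at h
  simp only [LinearMap.sub_apply, LinearMap.neg_apply, LinearMap.comp_apply,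
    LinearMap.rTensor_tmul, LinearEquiv.coe_coe, hsymm, ← tCommutator_eq_tCommutatorMap] at h
  rwa [sub_eq_zero, neg_eq_iff_eq_neg] at h

theorem leftComm_cartanPhi {t : g ⊗[K] g} (hsymm : TensorProduct.comm K g g t = t)
    (hinv : ∀ x : g, ⁅x, t⁆ = 0) :
    TensorProduct.leftComm K g g g (cartanPhi K t) = -cartanPhi K t := by
  rw [cartanPhi, map_smul, leftComm_tCommutator hsymm hinv, smul_neg]

theorem lTensor_comm_cartanPhi {t : g ⊗[K] g} (hsymm : TensorProduct.comm K g g t = t)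
    (hinv : ∀ x : g, ⁅x, t⁆ = 0) :
    (TensorProduct.comm K g g).toLinearMap.lTensor g (cartanPhi K t) = -cartanPhi K t := by
  rw [cartanPhi, map_smul, lTensor_comm_tCommutator hsymm hinv, smul_neg]

end Invariant

section Legs

variable {K g M : Type*} [Field K] [AddCommGroup g] [Module K g] [AddCommGroup M] [Module K M]
  (ρ : g →ₗ[K] Module.End K M)

@[simp] theorem threeLegM_tmul (x y z : g) :
    threeLegM ρ (x ⊗ₜ (y ⊗ₜ z)) = TensorProduct.map (ρ x) (TensorProduct.map (ρ y) (ρ z)) := by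
  simp [threeLegM, twoLegM]

theorem threeLegM_leftComm (w : g ⊗[K] (g ⊗[K] g)) (v : M ⊗[K] (M ⊗[K] M)) :
    threeLegM ρ (TensorProduct.leftComm K g g g w) (TensorProduct.leftComm K M M M v) =
      TensorProduct.leftComm K M M M (threeLegM ρ w v) := by
  have h : LinearMap.lcomp K _ (TensorProduct.leftComm K M M M).toLinearMap ∘ₗ threeLegM ρ ∘ₗ
      (TensorProduct.leftComm K g g g).toLinearMap =
      LinearMap.llcomp K _ _ _ (TensorProduct.leftComm K M M M).toLinearMap ∘ₗ threeLegM ρ := by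
    ext x y z a b c
    simp
  exact congr($h w v)

theorem threeLegM_lTensor_comm (w : g ⊗[K] (g ⊗[K] g)) (v : M ⊗[K] (M ⊗[K] M)) :
    threeLegM ρ ((TensorProduct.comm K g g).toLinearMap.lTensor g w)
        ((TensorProduct.comm K M M).toLinearMap.lTensor M v) =
      (TensorProduct.comm K M M).toLinearMap.lTensor M (threeLegM ρ w v) := by
  have h : LinearMap.lcomp K _ ((TensorProduct.comm K M M).toLinearMap.lTensor M) ∘ₗ threeLegM ρ ∘ₗ
      (TensorProduct.comm K g g).toLinearMap.lTensor g =
      LinearMap.llcomp K _ _ _ ((TensorProduct.comm K M M).toLinearMap.lTensor M) ∘ₗ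
        threeLegM ρ := by
    ext x y z a b c
    simp
  exact congr($h w v)

end Legs

section Mul3

variable {R A : Type*} [CommSemiring R] [AddCommMonoid A] [Module R A] {m : A ⊗[R] A →ₗ[R] A}

theorem mul3_lTensor_comm (hcomm : ∀ a b, m (a ⊗ₜ b) = m (b ⊗ₜ a)) (v : A ⊗[R] (A ⊗[R] A)) :
    (m ∘ₗ TensorProduct.map LinearMap.id m) ((TensorProduct.comm R A A).toLinearMap.lTensor A v) =
      (m ∘ₗ TensorProduct.map LinearMap.id m) v := by
  have h : (m ∘ₗ TensorProduct.map LinearMap.id m) ∘ₗ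
      (TensorProduct.comm R A A).toLinearMap.lTensor A = m ∘ₗ TensorProduct.map LinearMap.id m := by
    ext a b c
    simp [hcomm b c]
  exact congr($h v)

theorem mul3_leftComm (hcomm : ∀ a b, m (a ⊗ₜ b) = m (b ⊗ₜ a))
    (hassoc : ∀ a b c, m (a ⊗ₜ m (b ⊗ₜ c)) = m (m (a ⊗ₜ b) ⊗ₜ c)) (v : A ⊗[R] (A ⊗[R] A)) :
    (m ∘ₗ TensorProduct.map LinearMap.id m) (TensorProduct.leftComm R A A A v) =
      (m ∘ₗ TensorProduct.map LinearMap.id m) v := by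
  have h : (m ∘ₗ TensorProduct.map LinearMap.id m) ∘ₗ (TensorProduct.leftComm R A A A).toLinearMap =
      m ∘ₗ TensorProduct.map LinearMap.id m := by
    ext a b c
    simp [hassoc, hcomm b a]
  exact congr($h v)

end Mul3

section AlternatingLegs

variable {K g A : Type*} [Field K] [AddCommGroup g] [Module K g] [AddCommGroup A] [Module K A]
  {ρ : g →ₗ[K] Module.End K A} {m : A ⊗[K] A →ₗ[K] A} {w : g ⊗[K] (g ⊗[K] g)}

theorem mul3_threeLegM_swap12 (hcomm : ∀ a b, m (a ⊗ₜ b) = m (b ⊗ₜ a))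
    (hassoc : ∀ a b c, m (a ⊗ₜ m (b ⊗ₜ c)) = m (m (a ⊗ₜ b) ⊗ₜ c))
    (hw : TensorProduct.leftComm K g g g w = -w) (a b c : A) :
    (m ∘ₗ TensorProduct.map LinearMap.id m) (threeLegM ρ w (b ⊗ₜ (a ⊗ₜ c))) =
      -(m ∘ₗ TensorProduct.map LinearMap.id m) (threeLegM ρ w (a ⊗ₜ (b ⊗ₜ c))) := by
  have h := threeLegM_leftComm ρ w (a ⊗ₜ (b ⊗ₜ c))
  rw [hw, TensorProduct.leftComm_tmul, map_neg, LinearMap.neg_apply, neg_eq_iff_eq_neg] at h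
  rw [h, map_neg, mul3_leftComm hcomm hassoc]

theorem mul3_threeLegM_swap23 (hcomm : ∀ a b, m (a ⊗ₜ b) = m (b ⊗ₜ a))
    (hw : (TensorProduct.comm K g g).toLinearMap.lTensor g w = -w) (a b c : A) :
    (m ∘ₗ TensorProduct.map LinearMap.id m) (threeLegM ρ w (a ⊗ₜ (c ⊗ₜ b))) =
      -(m ∘ₗ TensorProduct.map LinearMap.id m) (threeLegM ρ w (a ⊗ₜ (b ⊗ₜ c))) := by
  have h := threeLegM_lTensor_comm ρ w (a ⊗ₜ (b ⊗ₜ c))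
  rw [hw, LinearMap.lTensor_tmul, LinearEquiv.coe_coe, TensorProduct.comm_tmul, map_neg,
    LinearMap.neg_apply, neg_eq_iff_eq_neg] at h
  rw [h, map_neg, mul3_lTensor_comm hcomm]

end AlternatingLegs

section AltSum

variable {M N : Type*} [AddCommGroup N]

def altSum : (M → M → M → N) →+ (M → M → M → N) where
  toFun f a b c := f a b c - f b a c - f a c b - f c b a + f b c a + f c a b
  map_zero' := by ext; simp
  map_add' f f' := by ext; simp only [Pi.add_apply]; abel

theorem altSum_apply (f : M → M → M → N) (a b c : M) :
    altSum f a b c = f a b c - f b a c - f a c b - f c b a + f b c a + f c a b := rfl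

theorem altSum_eq_zero_of_swap12 {f : M → M → M → N} (hf : ∀ a b c, f b a c = f a b c) :
    altSum f = 0 := by
  ext a b c
  rw [altSum_apply, Pi.zero_apply, Pi.zero_apply, Pi.zero_apply, hf a b c, hf a c b, hf b c a]
  abel

theorem altSum_eq_zero_of_swap23 {f : M → M → M → N} (hf : ∀ a b c, f a c b = f a b c) :
    altSum f = 0 := by
  ext a b c
  rw [altSum_apply, Pi.zero_apply, Pi.zero_apply, Pi.zero_apply, hf a b c, hf b c a, hf c a b]
  abel

theorem altSum_cycle (f : M → M → M → N) :
    altSum (fun a b c => f b c a) = altSum f := by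
  ext a b c
  simp only [altSum_apply]
  abel

theorem altSum_eq_six_smul {f : M → M → M → N} (h12 : ∀ a b c, f b a c = -f a b c)
    (h23 : ∀ a b c, f a c b = -f a b c) (a b c : M) :
    altSum f a b c = 6 • f a b c := by
  rw [altSum_apply, h12 b c a, h23 b a c, h12 a c b, h12 a b c, h23 a b c]
  abel

end AltSum

section Bracket

variable {R A : Type*} [CommRing R] [AddCommGroup A] [Module R A]

def commBracket (m : A ⊗[R] A →ₗ[R] A) (a b : A) : A := m (a ⊗ₜ b - b ⊗ₜ a)

theorem commBracket_swap (m : A ⊗[R] A →ₗ[R] A) (a b : A) :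
    commBracket m a b = -commBracket m b a := by
  rw [commBracket, commBracket, ← map_neg, neg_sub]

theorem map_commBracket {m : A ⊗[R] A →ₗ[R] A} {f : Module.End R A}
    (hf : f ∘ₗ m = m ∘ₗ (TensorProduct.map f LinearMap.id + TensorProduct.map LinearMap.id f))
    (a b : A) : f (commBracket m a b) = commBracket m (f a) b + commBracket m a (f b) := by
  have hf' : ∀ u v, f (m (u ⊗ₜ v)) = m (f u ⊗ₜ v) + m (u ⊗ₜ f v) := fun u v => by
    simpa [tmul_add] using congr($hf (u ⊗ₜ v))
  simp only [commBracket, map_sub, hf']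
  abel

variable {m₀ m₁ m₂ : A ⊗[R] A →ₗ[R] A}

theorem commBracket_leibniz (hcomm : ∀ a b, m₀ (a ⊗ₜ b) = m₀ (b ⊗ₜ a))
    (h₁ : ∀ a b c, m₀ (a ⊗ₜ m₁ (b ⊗ₜ c)) + m₁ (a ⊗ₜ m₀ (b ⊗ₜ c)) =
      m₀ (m₁ (a ⊗ₜ b) ⊗ₜ c) + m₁ (m₀ (a ⊗ₜ b) ⊗ₜ c)) (a b c : A) :
    commBracket m₁ a (m₀ (b ⊗ₜ c)) =
      m₀ (commBracket m₁ a b ⊗ₜ c) + m₀ (b ⊗ₜ commBracket m₁ a c) := by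
  have habc := h₁ a b c
  have hbca := h₁ b c a
  have hbac := h₁ b a c
  rw [hcomm c a, hcomm (m₁ (b ⊗ₜ c)) a] at hbca
  rw [hcomm b a] at hbac
  simp only [commBracket, map_sub, tmul_sub, sub_tmul]
  linear_combination (norm := module) habc + hbca - hbac

theorem commBracket_jacobi {P : A → A → A → A} (hcomm : ∀ a b, m₀ (a ⊗ₜ b) = m₀ (b ⊗ₜ a))
    (h₂ : ∀ a b c, P a b c + m₀ (a ⊗ₜ m₂ (b ⊗ₜ c)) + m₁ (a ⊗ₜ m₁ (b ⊗ₜ c)) +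
        m₂ (a ⊗ₜ m₀ (b ⊗ₜ c)) =
      m₀ (m₂ (a ⊗ₜ b) ⊗ₜ c) + m₁ (m₁ (a ⊗ₜ b) ⊗ₜ c) + m₂ (m₀ (a ⊗ₜ b) ⊗ₜ c)) (a b c : A) :
    commBracket m₁ a (commBracket m₁ b c) + commBracket m₁ b (commBracket m₁ c a) +
        commBracket m₁ c (commBracket m₁ a b) = -altSum P a b c := by
  have hP : P = ((fun a b c => m₀ (m₂ (a ⊗ₜ b) ⊗ₜ c)) - fun a b c => m₀ (a ⊗ₜ m₂ (b ⊗ₜ c))) +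
      ((fun a b c => m₁ (m₁ (a ⊗ₜ b) ⊗ₜ c)) - fun a b c => m₁ (a ⊗ₜ m₁ (b ⊗ₜ c))) +
      ((fun a b c => m₂ (m₀ (a ⊗ₜ b) ⊗ₜ c)) - fun a b c => m₂ (a ⊗ₜ m₀ (b ⊗ₜ c))) := by
    funext a b c
    simp only [Pi.add_apply, Pi.sub_apply]
    linear_combination (norm := module) h₂ a b c
  have hcycle : altSum (fun a b c => m₀ (a ⊗ₜ m₂ (b ⊗ₜ c))) =
      altSum (fun a b c => m₀ (m₂ (a ⊗ₜ b) ⊗ₜ c)) := by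
    simp_rw [hcomm _ (m₂ _)]
    exact altSum_cycle (fun a b c => m₀ (m₂ (a ⊗ₜ b) ⊗ₜ c))
  have hsymm12 : altSum (fun a b c => m₂ (m₀ (a ⊗ₜ b) ⊗ₜ c)) = 0 :=
    altSum_eq_zero_of_swap12 fun a b c => by rw [hcomm]
  have hsymm23 : altSum (fun a b c => m₂ (a ⊗ₜ m₀ (b ⊗ₜ c))) = 0 :=
    altSum_eq_zero_of_swap23 fun a b c => by rw [hcomm]
  rw [hP, map_add, map_add, map_sub, map_sub, map_sub, hcycle, hsymm12, hsymm23]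
  simp only [sub_self, zero_add, add_zero, Pi.zero_apply, Pi.add_apply, Pi.sub_apply, altSum_apply,
    commBracket, map_sub, tmul_sub, sub_tmul]
  abel

end Bracket

section TwistedAssoc

variable {R A : Type*} [CommRing R] [AddCommGroup A] [Module R A]

def TwistedAssocAt (ms : ℕ → A ⊗[R] A →ₗ[R] A) (Φs : ℕ → Module.End R (A ⊗[R] (A ⊗[R] A)))
    (n : ℕ) : Prop :=
  ∑ p ∈ Finset.HasAntidiagonal.antidiagonal n, ∑ q ∈ Finset.HasAntidiagonal.antidiagonal p.2,
      (ms p.1) ∘ₗ (TensorProduct.map LinearMap.id (ms q.1)) ∘ₗ (Φs q.2) =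
    ∑ p ∈ Finset.HasAntidiagonal.antidiagonal n,
      (ms p.1) ∘ₗ (TensorProduct.map (ms p.2) LinearMap.id) ∘ₗ
        (TensorProduct.assoc R A A A).symm.toLinearMap

variable {ms : ℕ → A ⊗[R] A →ₗ[R] A} {Φs : ℕ → Module.End R (A ⊗[R] (A ⊗[R] A))}

theorem TwistedAssocAt.order_zero (hΦ0 : Φs 0 = LinearMap.id) (h : TwistedAssocAt ms Φs 0)
    (a b c : A) : ms 0 (a ⊗ₜ ms 0 (b ⊗ₜ c)) = ms 0 (ms 0 (a ⊗ₜ b) ⊗ₜ c) := by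
  simpa [TwistedAssocAt, hΦ0] using congr($h (a ⊗ₜ (b ⊗ₜ c)))

theorem TwistedAssocAt.order_one (hΦ0 : Φs 0 = LinearMap.id) (hΦ1 : Φs 1 = 0)
    (h : TwistedAssocAt ms Φs 1) (a b c : A) :
    ms 0 (a ⊗ₜ ms 1 (b ⊗ₜ c)) + ms 1 (a ⊗ₜ ms 0 (b ⊗ₜ c)) =
      ms 0 (ms 1 (a ⊗ₜ b) ⊗ₜ c) + ms 1 (ms 0 (a ⊗ₜ b) ⊗ₜ c) := by
  simpa [TwistedAssocAt, Finset.Nat.antidiagonal_succ, hΦ0, hΦ1] using congr($h (a ⊗ₜ (b ⊗ₜ c)))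

theorem TwistedAssocAt.order_two (hΦ0 : Φs 0 = LinearMap.id) (hΦ1 : Φs 1 = 0)
    (h : TwistedAssocAt ms Φs 2) (a b c : A) :
    (ms 0 ∘ₗ TensorProduct.map LinearMap.id (ms 0)) (Φs 2 (a ⊗ₜ (b ⊗ₜ c))) +
        ms 0 (a ⊗ₜ ms 2 (b ⊗ₜ c)) + ms 1 (a ⊗ₜ ms 1 (b ⊗ₜ c)) + ms 2 (a ⊗ₜ ms 0 (b ⊗ₜ c)) =
      ms 0 (ms 2 (a ⊗ₜ b) ⊗ₜ c) + ms 1 (ms 1 (a ⊗ₜ b) ⊗ₜ c) + ms 2 (ms 0 (a ⊗ₜ b) ⊗ₜ c) := by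
  simpa [TwistedAssocAt, Finset.Nat.antidiagonal_succ, hΦ0, hΦ1, add_assoc] using
    congr($h (a ⊗ₜ (b ⊗ₜ c)))

end TwistedAssoc

theorem statement_15_general
    {g : Type*} [LieRing g] [LieAlgebra k g]
    {A : Type*} [AddCommGroup A] [Module k A]
    (ρ : g →ₗ[k] Module.End k A)
    (t : g ⊗[k] g)
    (hsymm : TensorProduct.comm k g g t = t)
    (hinv : ∀ x : g, ⁅x, t⁆ = 0)
    -- the coefficients of `m_ħ`
    (ms : ℕ → (A ⊗[k] A →ₗ[k] A))
    -- the coefficients of the action `Φ_A` of `Φ(ħt¹², ħt²³)`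
    (Φs : ℕ → Module.End k (A ⊗[k] (A ⊗[k] A)))
    (hΦ0 : Φs 0 = LinearMap.id)
    (hΦ1 : Φs 1 = 0)
    (hΦ2 : Φs 2 = (6⁻¹ : k) • threeLegM ρ (cartanPhi k t))
    -- `g`-equivariance of each coefficient of `m_ħ`
    (hequiv : ∀ (n : ℕ) (x : g),
      (ρ x) ∘ₗ ms n = ms n ∘ₗ
        (TensorProduct.map (ρ x) LinearMap.id + TensorProduct.map LinearMap.id (ρ x)))
    -- `Φ`-twisted associativity, order by order in `ħ`:
    -- `Σ_{i+j+l=n} mᵢ ∘ (1 ⊗ mⱼ) ∘ Φ_l = Σ_{i+j=n} mᵢ ∘ (mⱼ ⊗ 1)`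
    (hassoc : ∀ n : ℕ,
      ∑ p ∈ Finset.HasAntidiagonal.antidiagonal n, ∑ q ∈ Finset.HasAntidiagonal.antidiagonal p.2,
        (ms p.1) ∘ₗ (TensorProduct.map LinearMap.id (ms q.1)) ∘ₗ (Φs q.2) =
      ∑ p ∈ Finset.HasAntidiagonal.antidiagonal n,
        (ms p.1) ∘ₗ (TensorProduct.map (ms p.2) LinearMap.id) ∘ₗ
          (TensorProduct.assoc k A A A).symm.toLinearMap)
    -- `m₀` is commutative
    (hcomm : ∀ a b : A, ms 0 (a ⊗ₜ[k] b) = ms 0 (b ⊗ₜ[k] a))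
    -- the bracket
    (br : A → A → A)
    (hbr : ∀ a b, br a b = ms 1 (a ⊗ₜ[k] b - b ⊗ₜ[k] a)) :
    -- skew-symmetry
    (∀ a b, br a b = - br b a)
    -- biderivation with respect to `m₀`
    ∧ (∀ a b c : A,
        br a (ms 0 (b ⊗ₜ[k] c)) = ms 0 (br a b ⊗ₜ[k] c) + ms 0 (b ⊗ₜ[k] br a c))
    -- `g`-invariance
    ∧ (∀ (x : g) (a b : A), ρ x (br a b) = br (ρ x a) b + br a (ρ x b))
    -- the `φ`-twisted Jacobi identity
    ∧ (∀ a₁ a₂ a₃ : A,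
        br a₁ (br a₂ a₃) + br a₂ (br a₃ a₁) + br a₃ (br a₁ a₂) =
          - (ms 0 ∘ₗ TensorProduct.map LinearMap.id (ms 0))
              (threeLegM ρ (cartanPhi k t) (a₁ ⊗ₜ[k] (a₂ ⊗ₜ[k] a₃)))) := by
  obtain rfl : br = commBracket (ms 1) := funext₂ hbr
  have hm₀ := TwistedAssocAt.order_zero hΦ0 (hassoc 0)
  have hm₁ := TwistedAssocAt.order_one hΦ0 hΦ1 (hassoc 1)
  have hm₂ := TwistedAssocAt.order_two hΦ0 hΦ1 (hassoc 2)
  simp only [hΦ2, LinearMap.smul_apply, map_smul] at hm₂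
  refine ⟨commBracket_swap (ms 1), commBracket_leibniz hcomm hm₁,
    fun x => map_commBracket (hequiv 1 x), fun a₁ a₂ a₃ => ?_⟩
  rw [commBracket_jacobi hcomm hm₂, altSum_eq_six_smul, ← Nat.cast_smul_eq_nsmul k, smul_smul]
  · norm_num
  · intro a b c
    rw [mul3_threeLegM_swap12 hcomm hm₀ (leftComm_cartanPhi hsymm hinv), smul_neg]
  · intro a b c
    rw [mul3_threeLegM_swap23 hcomm (lTensor_comm_cartanPhi hsymm hinv), smul_neg]

/-- Enriquez–Etingof: suppose `m_ħ = Σ ħⁱ m⁽ⁱ⁾` is `Φ`-twisted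
associative, where `Φ_A = Σ ħⁿ Φₙ` with `Φ₀ = 1`, `Φ₁ = 0`, `Φ₂ = φ/6` (the expansion
of `Φ(ħt¹², ħt²³)`), each `m⁽ⁱ⁾` is `g`-equivariant, and `m₀ = m⁽⁰⁾` is commutative.
Then `{a,b} := m⁽¹⁾(a⊗b − b⊗a)` is a `g`-invariant skew-symmetric biderivation of
`(A, m₀)` satisfying `{a₁,{a₂,a₃}} + c.p. = −m₀⁽³⁾(φ·(a₁⊗a₂⊗a₃))`, i.e. `(A, m₀, {·,·})`
is a `g`-quasi-Poisson algebra. -/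
theorem statement_15
    {g : Type*} [LieRing g] [LieAlgebra k g]
    {A : Type*} [AddCommGroup A] [Module k A]
    (ρ : g →ₗ[k] Module.End k A)
    (hlie : ∀ x y : g, ρ ⁅x, y⁆ = ρ x * ρ y - ρ y * ρ x)
    (t : g ⊗[k] g)
    (hsymm : TensorProduct.comm k g g t = t)
    (hinv : ∀ x : g, ⁅x, t⁆ = 0)
    -- the coefficients of `m_ħ`
    (ms : ℕ → (A ⊗[k] A →ₗ[k] A))
    -- the coefficients of the action `Φ_A` of `Φ(ħt¹², ħt²³)`
    (Φs : ℕ → Module.End k (A ⊗[k] (A ⊗[k] A)))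
    (hΦ0 : Φs 0 = LinearMap.id)
    (hΦ1 : Φs 1 = 0)
    (hΦ2 : Φs 2 = (6⁻¹ : k) • threeLegM ρ (cartanPhi k t))
    -- `g`-equivariance of each coefficient of `m_ħ`
    (hequiv : ∀ (n : ℕ) (x : g),
      (ρ x) ∘ₗ ms n = ms n ∘ₗ
        (TensorProduct.map (ρ x) LinearMap.id + TensorProduct.map LinearMap.id (ρ x)))
    -- `Φ`-twisted associativity, order by order in `ħ`:
    -- `Σ_{i+j+l=n} mᵢ ∘ (1 ⊗ mⱼ) ∘ Φ_l = Σ_{i+j=n} mᵢ ∘ (mⱼ ⊗ 1)`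
    (hassoc : ∀ n : ℕ,
      ∑ p ∈ Finset.HasAntidiagonal.antidiagonal n, ∑ q ∈ Finset.HasAntidiagonal.antidiagonal p.2,
        (ms p.1) ∘ₗ (TensorProduct.map LinearMap.id (ms q.1)) ∘ₗ (Φs q.2) =
      ∑ p ∈ Finset.HasAntidiagonal.antidiagonal n,
        (ms p.1) ∘ₗ (TensorProduct.map (ms p.2) LinearMap.id) ∘ₗ
          (TensorProduct.assoc k A A A).symm.toLinearMap)
    -- `m₀` is commutative
    (hcomm : ∀ a b : A, ms 0 (a ⊗ₜ[k] b) = ms 0 (b ⊗ₜ[k] a))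
    -- the bracket
    (br : A → A → A)
    (hbr : ∀ a b, br a b = ms 1 (a ⊗ₜ[k] b - b ⊗ₜ[k] a)) :
    -- skew-symmetry
    (∀ a b, br a b = - br b a)
    -- biderivation with respect to `m₀`
    ∧ (∀ a b c : A,
        br a (ms 0 (b ⊗ₜ[k] c)) = ms 0 (br a b ⊗ₜ[k] c) + ms 0 (b ⊗ₜ[k] br a c))
    -- `g`-invariance
    ∧ (∀ (x : g) (a b : A), ρ x (br a b) = br (ρ x a) b + br a (ρ x b))
    -- the `φ`-twisted Jacobi identity
    ∧ (∀ a₁ a₂ a₃ : A,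
        br a₁ (br a₂ a₃) + br a₂ (br a₃ a₁) + br a₃ (br a₁ a₂) =
          - (ms 0 ∘ₗ TensorProduct.map LinearMap.id (ms 0))
              (threeLegM ρ (cartanPhi k t) (a₁ ⊗ₜ[k] (a₂ ⊗ₜ[k] a₃)))) :=
  statement_15_general ρ t hsymm hinv ms Φs hΦ0 hΦ1 hΦ2 hequiv hassoc hcomm br hbr
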